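/- Let X and Y be stochastic processes on an open interval I that are both mean square differentiable (differentiable in the L²(Ω) sense) at t₀ ∈ I. Then the product process XY is differentiable at t₀ in the L¹(Ω) sense, and (XY)'(t₀) = X'(t₀)Y(t₀) + X(t₀)Y'(t₀). -/

import Mathlib

/-!
Write `dX h = (X(t₀+h) - X(t₀))/h - X'`, and similarly `dY`, `ΔY h = Y(t₀+h) - Y(t₀)`. The error
of the product rule splits exactly into `dX·Y(t₀) + X(t₀)·dY + dX·ΔY + X'·ΔY`. Each term is a
product of a factor whose `L²` norm tends to `0` and one whose `L²` norm converges (`ΔY → 0`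
because `ΔY h = h (dY h + Y')`), so by Hölder it tends to `0` in `L¹`. Only the quasi-triangle
inequality is used, so the argument works for any Hölder triple `1/r = 1/p + 1/q`.
-/

open MeasureTheory Filter Set
open scoped ENNReal Topology

section

variable {Ω : Type*} [MeasurableSpace Ω] {P : Measure Ω}

section Limits

variable {ι : Type*} {l : Filter ι}

lemma tendsto_eLpNorm_add_of_tendsto_zero {E : Type*} [NormedAddCommGroup E] {p : ℝ≥0∞}
    {f g : ι → Ω → E} (hfm : ∀ᶠ i in l, AEStronglyMeasurable (f i) P)
    (hgm : ∀ᶠ i in l, AEStronglyMeasurable (g i) P)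
    (hf : Tendsto (fun i => eLpNorm (f i) p P) l (𝓝 0))
    (hg : Tendsto (fun i => eLpNorm (g i) p P) l (𝓝 0)) :
    Tendsto (fun i => eLpNorm (f i + g i) p P) l (𝓝 0) := by
  have hbound : Tendsto (fun i => ENNReal.LpAddConst p * (eLpNorm (f i) p P + eLpNorm (g i) p P))
      l (𝓝 0) := by
    simpa using ENNReal.Tendsto.const_mul (hf.add hg) (Or.inr (ENNReal.LpAddConst_lt_top p).ne)
  refine tendsto_of_tendsto_of_tendsto_of_le_of_le' tendsto_const_nhds hbound
    (.of_forall fun _ => zero_le) ?_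
  filter_upwards [hfm, hgm] with i hfi hgi
  exact eLpNorm_add_le' hfi hgi p

variable {𝕜 : Type*} [NormedRing 𝕜] {p q r : ℝ≥0∞} [p.HolderTriple q r] {f g : ι → Ω → 𝕜}
  {c : ℝ≥0∞}

lemma tendsto_eLpNorm_mul_of_tendsto_zero_left (hfm : ∀ᶠ i in l, AEStronglyMeasurable (f i) P)
    (hgm : ∀ᶠ i in l, AEStronglyMeasurable (g i) P)
    (hf : Tendsto (fun i => eLpNorm (f i) p P) l (𝓝 0))
    (hg : Tendsto (fun i => eLpNorm (g i) q P) l (𝓝 c)) (hc : c ≠ ∞) :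
    Tendsto (fun i => eLpNorm (f i * g i) r P) l (𝓝 0) := by
  have hbound : Tendsto (fun i => eLpNorm (f i) p P * eLpNorm (g i) q P) l (𝓝 0) := by
    simpa using ENNReal.Tendsto.mul hf (Or.inr hc) hg (Or.inr ENNReal.zero_ne_top)
  refine tendsto_of_tendsto_of_tendsto_of_le_of_le' tendsto_const_nhds hbound
    (.of_forall fun _ => zero_le) ?_
  filter_upwards [hfm, hgm] with i hfi hgi
  exact eLpNorm_smul_le_mul_eLpNorm (f := g i) (φ := f i) hgi hfi

lemma tendsto_eLpNorm_mul_of_tendsto_zero_right (hfm : ∀ᶠ i in l, AEStronglyMeasurable (f i) P)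
    (hgm : ∀ᶠ i in l, AEStronglyMeasurable (g i) P)
    (hf : Tendsto (fun i => eLpNorm (f i) p P) l (𝓝 c)) (hc : c ≠ ∞)
    (hg : Tendsto (fun i => eLpNorm (g i) q P) l (𝓝 0)) :
    Tendsto (fun i => eLpNorm (f i * g i) r P) l (𝓝 0) := by
  have hbound : Tendsto (fun i => eLpNorm (f i) p P * eLpNorm (g i) q P) l (𝓝 0) := by
    simpa using ENNReal.Tendsto.mul hf (Or.inr ENNReal.zero_ne_top) hg (Or.inr hc)
  refine tendsto_of_tendsto_of_tendsto_of_le_of_le' tendsto_const_nhds hbound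
    (.of_forall fun _ => zero_le) ?_
  filter_upwards [hfm, hgm] with i hfi hgi
  exact eLpNorm_smul_le_mul_eLpNorm (f := g i) (φ := f i) hgi hfi

end Limits

def HasLpDerivAt (P : Measure Ω) (p : ℝ≥0∞) (X : ℝ → Ω → ℝ) (X' : Ω → ℝ) (t₀ : ℝ) : Prop :=
  Tendsto (fun h => eLpNorm (fun ω => (X (t₀ + h) ω - X t₀ ω) / h - X' ω) p P) (𝓝[≠] 0) (𝓝 0)

lemma eventually_nhdsNE_zero_add {t₀ : ℝ} {p : ℝ → Prop} (hp : ∀ᶠ t in 𝓝 t₀, p t) :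
    ∀ᶠ h in 𝓝[≠] 0, p (t₀ + h) :=
  (((continuous_const_add t₀).tendsto' 0 t₀ (add_zero t₀)).eventually hp).filter_mono
    nhdsWithin_le_nhds

lemma mul_slope_sub_eq {x₀ x₁ y₀ y₁ x' y' h : ℝ} (hh : h ≠ 0) :
    (x₁ * y₁ - x₀ * y₀) / h - (x' * y₀ + x₀ * y') =
      ((x₁ - x₀) / h - x') * y₀ + x₀ * ((y₁ - y₀) / h - y')
        + (((x₁ - x₀) / h - x') * (y₁ - y₀) + x' * (y₁ - y₀)) := by
  field_simp
  ring

section Derivative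

variable {p : ℝ≥0∞} {X : ℝ → Ω → ℝ} {X' : Ω → ℝ} {t₀ : ℝ}

lemma eventually_aestronglyMeasurable_sub (hX : ∀ᶠ t in 𝓝 t₀, AEStronglyMeasurable (X t) P) :
    ∀ᶠ h in 𝓝[≠] 0, AEStronglyMeasurable (fun ω => X (t₀ + h) ω - X t₀ ω) P := by
  have hX₀ := hX.self_of_nhds
  filter_upwards [eventually_nhdsNE_zero_add hX] with h hXh
  fun_prop

lemma eventually_aestronglyMeasurable_slope_sub
    (hX : ∀ᶠ t in 𝓝 t₀, AEStronglyMeasurable (X t) P) (hX' : AEStronglyMeasurable X' P) :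
    ∀ᶠ h in 𝓝[≠] 0, AEStronglyMeasurable (fun ω => (X (t₀ + h) ω - X t₀ ω) / h - X' ω) P := by
  filter_upwards [eventually_aestronglyMeasurable_sub hX] with h hXh
  fun_prop

lemma HasLpDerivAt.tendsto_eLpNorm_sub (hXd : HasLpDerivAt P p X X' t₀)
    (hX : ∀ᶠ t in 𝓝 t₀, AEStronglyMeasurable (X t) P) (hX' : MemLp X' p P) :
    Tendsto (fun h => eLpNorm (fun ω => X (t₀ + h) ω - X t₀ ω) p P) (𝓝[≠] 0) (𝓝 0) := by
  have henorm : Tendsto (fun h : ℝ => ‖h‖ₑ) (𝓝[≠] 0) (𝓝 0) :=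
    (continuous_enorm.tendsto' 0 0 enorm_zero).mono_left nhdsWithin_le_nhds
  have hbound : Tendsto (fun h => ‖h‖ₑ * (ENNReal.LpAddConst p *
      (eLpNorm (fun ω => (X (t₀ + h) ω - X t₀ ω) / h - X' ω) p P + eLpNorm X' p P)))
      (𝓝[≠] 0) (𝓝 0) := by
    have hfin : ENNReal.LpAddConst p * (0 + eLpNorm X' p P) ≠ ∞ :=
      ENNReal.mul_ne_top (ENNReal.LpAddConst_lt_top p).ne (by simpa using hX'.eLpNorm_ne_top)
    simpa using ENNReal.Tendsto.mul henorm (Or.inr hfin)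
      (ENNReal.Tendsto.const_mul (hXd.add tendsto_const_nhds)
        (Or.inr (ENNReal.LpAddConst_lt_top p).ne)) (Or.inr ENNReal.zero_ne_top)
  refine tendsto_of_tendsto_of_tendsto_of_le_of_le' tendsto_const_nhds hbound
    (.of_forall fun _ => zero_le) ?_
  filter_upwards [eventually_aestronglyMeasurable_slope_sub hX hX'.1, self_mem_nhdsWithin]
    with h hdXm (hh : h ≠ 0)
  have hsmul : (fun ω => X (t₀ + h) ω - X t₀ ω)
      = h • ((fun ω => (X (t₀ + h) ω - X t₀ ω) / h - X' ω) + X') := by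
    ext ω
    simp only [Pi.smul_apply, Pi.add_apply, smul_eq_mul]
    field_simp
    ring
  rw [hsmul, eLpNorm_const_smul]
  gcongr
  exact eLpNorm_add_le' hdXm hX'.1 p

lemma HasLpDerivAt.mul {q r : ℝ≥0∞} [p.HolderTriple q r] {Y : ℝ → Ω → ℝ} {Y' : Ω → ℝ}
    (hXd : HasLpDerivAt P p X X' t₀) (hYd : HasLpDerivAt P q Y Y' t₀)
    (hX : ∀ᶠ t in 𝓝 t₀, MemLp (X t) p P) (hY : ∀ᶠ t in 𝓝 t₀, MemLp (Y t) q P)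
    (hX' : MemLp X' p P) (hY' : MemLp Y' q P) :
    HasLpDerivAt P r (fun t ω => X t ω * Y t ω) (fun ω => X' ω * Y t₀ ω + X t₀ ω * Y' ω) t₀ := by
  have hXm : ∀ᶠ t in 𝓝 t₀, AEStronglyMeasurable (X t) P := hX.mono fun _ h => h.1
  have hYm : ∀ᶠ t in 𝓝 t₀, AEStronglyMeasurable (Y t) P := hY.mono fun _ h => h.1
  have hX₀ := hXm.self_of_nhds
  have hY₀ := hYm.self_of_nhds
  have hX'm := hX'.aestronglyMeasurable
  set dX := fun (h : ℝ) ω => (X (t₀ + h) ω - X t₀ ω) / h - X' ω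
  set dY := fun (h : ℝ) ω => (Y (t₀ + h) ω - Y t₀ ω) / h - Y' ω
  set ΔY := fun (h : ℝ) ω => Y (t₀ + h) ω - Y t₀ ω
  have hdXm : ∀ᶠ h in 𝓝[≠] 0, AEStronglyMeasurable (dX h) P :=
    eventually_aestronglyMeasurable_slope_sub hXm hX'm
  have hdYm : ∀ᶠ h in 𝓝[≠] 0, AEStronglyMeasurable (dY h) P :=
    eventually_aestronglyMeasurable_slope_sub hYm hY'.1
  have hΔYm : ∀ᶠ h in 𝓝[≠] 0, AEStronglyMeasurable (ΔY h) P :=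
    eventually_aestronglyMeasurable_sub hYm
  have hΔY : Tendsto (fun h => eLpNorm (ΔY h) q P) (𝓝[≠] 0) (𝓝 0) :=
    hYd.tendsto_eLpNorm_sub hYm hY'
  have hsplit : ∀ᶠ h in 𝓝[≠] 0,
      dX h * Y t₀ + X t₀ * dY h + (dX h * ΔY h + X' * ΔY h)
      = fun ω => (X (t₀ + h) ω * Y (t₀ + h) ω - X t₀ ω * Y t₀ ω) / h
          - (X' ω * Y t₀ ω + X t₀ ω * Y' ω) := by
    filter_upwards [self_mem_nhdsWithin] with h (hh : h ≠ 0)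
    ext ω
    exact (mul_slope_sub_eq hh).symm
  have h₁ : Tendsto (fun h => eLpNorm (dX h * Y t₀) r P) (𝓝[≠] 0) (𝓝 0) :=
    tendsto_eLpNorm_mul_of_tendsto_zero_left hdXm (.of_forall fun _ => hY₀) hXd
      tendsto_const_nhds hY.self_of_nhds.eLpNorm_ne_top
  have h₂ : Tendsto (fun h => eLpNorm (X t₀ * dY h) r P) (𝓝[≠] 0) (𝓝 0) :=
    tendsto_eLpNorm_mul_of_tendsto_zero_right (.of_forall fun _ => hX₀) hdYm
      tendsto_const_nhds hX.self_of_nhds.eLpNorm_ne_top hYd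
  have h₃ : Tendsto (fun h => eLpNorm (dX h * ΔY h) r P) (𝓝[≠] 0) (𝓝 0) :=
    tendsto_eLpNorm_mul_of_tendsto_zero_left hdXm hΔYm hXd hΔY ENNReal.zero_ne_top
  have h₄ : Tendsto (fun h => eLpNorm (X' * ΔY h) r P) (𝓝[≠] 0) (𝓝 0) :=
    tendsto_eLpNorm_mul_of_tendsto_zero_right (.of_forall fun _ => hX'm) hΔYm
      tendsto_const_nhds hX'.eLpNorm_ne_top hΔY
  have hsum := tendsto_eLpNorm_add_of_tendsto_zero
    ((hdXm.and hdYm).mono fun _ h => (h.1.mul hY₀).add (hX₀.mul h.2))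
    ((hdXm.and hΔYm).mono fun _ h => (h.1.mul h.2).add (hX'm.mul h.2))
    (tendsto_eLpNorm_add_of_tendsto_zero (hdXm.mono fun _ h => h.mul hY₀)
      (hdYm.mono fun _ h => hX₀.mul h) h₁ h₂)
    (tendsto_eLpNorm_add_of_tendsto_zero ((hdXm.and hΔYm).mono fun _ h => h.1.mul h.2)
      (hΔYm.mono fun _ h => hX'm.mul h) h₃ h₄)
  refine hsum.congr' ?_
  filter_upwards [hsplit] with h hh
  rw [hh]

end Derivative

end

theorem product_L1_differentiable_general
    {Ω : Type*} [MeasurableSpace Ω] (P : Measure Ω)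
    (I : Set ℝ) (hI : IsOpen I) (t₀ : ℝ) (ht₀ : t₀ ∈ I)
    (X Y : ℝ → Ω → ℝ) (X' Y' : Ω → ℝ)
    (hX : ∀ t ∈ I, MemLp (X t) 2 P) (hY : ∀ t ∈ I, MemLp (Y t) 2 P)
    (hX' : MemLp X' 2 P) (hY' : MemLp Y' 2 P)
    (hXd : Tendsto (fun h : ℝ =>
        eLpNorm (fun ω => (X (t₀ + h) ω - X t₀ ω) / h - X' ω) 2 P)
      (nhdsWithin 0 {0}ᶜ) (nhds 0))
    (hYd : Tendsto (fun h : ℝ =>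
        eLpNorm (fun ω => (Y (t₀ + h) ω - Y t₀ ω) / h - Y' ω) 2 P)
      (nhdsWithin 0 {0}ᶜ) (nhds 0)) :
    MemLp (fun ω => X' ω * Y t₀ ω + X t₀ ω * Y' ω) 1 P ∧
    Tendsto (fun h : ℝ =>
        eLpNorm (fun ω => (X (t₀ + h) ω * Y (t₀ + h) ω - X t₀ ω * Y t₀ ω) / h
          - (X' ω * Y t₀ ω + X t₀ ω * Y' ω)) 1 P)
      (nhdsWithin 0 {0}ᶜ) (nhds 0) :=
  ⟨((hY t₀ ht₀).mul' hX').add (hY'.mul' (hX t₀ ht₀)),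
    HasLpDerivAt.mul hXd hYd (eventually_of_mem (hI.mem_nhds ht₀) hX)
      (eventually_of_mem (hI.mem_nhds ht₀) hY) hX' hY'⟩

/-- If the processes `X` and `Y` are mean square (`L²`) differentiable at `t₀ ∈ I`, then the
product `XY` is `L¹` differentiable at `t₀`, with derivative `X'(t₀)Y(t₀) + X(t₀)Y'(t₀)`. -/
theorem product_L1_differentiable
    {Ω : Type*} [MeasurableSpace Ω] (P : Measure Ω) [IsProbabilityMeasure P]
    (I : Set ℝ) (hI : IsOpen I) (t₀ : ℝ) (ht₀ : t₀ ∈ I)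
    (X Y : ℝ → Ω → ℝ) (X' Y' : Ω → ℝ)
    (hX : ∀ t ∈ I, MemLp (X t) 2 P) (hY : ∀ t ∈ I, MemLp (Y t) 2 P)
    (hX' : MemLp X' 2 P) (hY' : MemLp Y' 2 P)
    (hXd : Tendsto (fun h : ℝ =>
        eLpNorm (fun ω => (X (t₀ + h) ω - X t₀ ω) / h - X' ω) 2 P)
      (nhdsWithin 0 {0}ᶜ) (nhds 0))
    (hYd : Tendsto (fun h : ℝ =>
        eLpNorm (fun ω => (Y (t₀ + h) ω - Y t₀ ω) / h - Y' ω) 2 P)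
      (nhdsWithin 0 {0}ᶜ) (nhds 0)) :
    MemLp (fun ω => X' ω * Y t₀ ω + X t₀ ω * Y' ω) 1 P ∧
    Tendsto (fun h : ℝ =>
        eLpNorm (fun ω => (X (t₀ + h) ω * Y (t₀ + h) ω - X t₀ ω * Y t₀ ω) / h
          - (X' ω * Y t₀ ω + X t₀ ω * Y' ω)) 1 P)
      (nhdsWithin 0 {0}ᶜ) (nhds 0) :=
  product_L1_differentiable_general P I hI t₀ ht₀ X Y X' Y' hX hY hX' hY' hXd hYd
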